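/- arXiv:0905.1226 — 7 statements merged into one kernel-verified Lean document; each statement's English description precedes it below -/
import Mathlib

section
/- Let N be a commutative ℝ-algebra with unit and I an ideal of finite codimension s > 0. Let J be the intersection of all finite-codimensional maximal ideals of N containing I, and suppose I + Jⁿ = I + J^{n+1} for some n. Then Jⁿ ⊆ I, and hence J ⊆ √I (the radical of I). -/
/-!
Pass to the finite-dimensional, hence Noetherian, algebra `N ⧸ I`. There the image `K` of `J`
lies in the Jacobson radical, because the maximal ideals containing `I` are automatically of
finite codimension, so `J` is the Jacobson radical of `I`. The hypothesis says `Kⁿ = K • Kⁿ`,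
and Nakayama's lemma for the finitely generated ideal `Kⁿ` gives `Kⁿ = 0`, i.e. `Jⁿ ⊆ I`.
-/

namespace Ideal

variable {R : Type*} [CommRing R]

theorem pow_eq_bot_of_pow_succ_eq [IsNoetherianRing R] {K : Ideal R} {n : ℕ}
    (hK : K ≤ jacobson ⊥) (h : K ^ n = K ^ (n + 1)) : K ^ n = ⊥ :=
  Submodule.eq_bot_of_le_smul_of_le_jacobson_bot K _ (IsNoetherian.noetherian _)
    (by rw [smul_eq_mul, ← pow_succ', h]) hK

theorem pow_le_of_sup_pow_eq_sup_pow_succ {I J : Ideal R} [IsNoetherianRing (R ⧸ I)] {n : ℕ}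
    (hJ : J ≤ I.jacobson) (h : I ⊔ J ^ n = I ⊔ J ^ (n + 1)) : J ^ n ≤ I := by
  have hmapI : I.map (Quotient.mk I) = ⊥ := map_quotient_self I
  have hjac : J.map (Quotient.mk I) ≤ jacobson ⊥ := by
    rw [← hmapI, ← map_jacobson_of_surjective Quotient.mk_surjective (by rw [mk_ker])]
    exact map_mono hJ
  have hstab : J.map (Quotient.mk I) ^ n = J.map (Quotient.mk I) ^ (n + 1) := by
    have := congrArg (map (Quotient.mk I)) h
    rwa [map_sup, map_sup, hmapI, bot_sup_eq, bot_sup_eq, Ideal.map_pow, Ideal.map_pow] at this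
  rw [← mk_ker (I := I), ← map_eq_bot_iff_le_ker, Ideal.map_pow]
  exact pow_eq_bot_of_pow_succ_eq hjac hstab

theorem jacobson_eq_sInf_finiteDimensional {k A : Type*} [Field k] [CommRing A] [Algebra k A]
    (I : Ideal A) [FiniteDimensional k (A ⧸ I)] :
    I.jacobson = sInf {m : Ideal A | m.IsMaximal ∧ I ≤ m ∧ FiniteDimensional k (A ⧸ m)} := by
  rw [jacobson]
  congr 1
  ext m
  refine ⟨fun ⟨hIm, hm⟩ => ⟨hm, hIm, ?_⟩, fun ⟨hm, hIm, _⟩ => ⟨hIm, hm⟩⟩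
  exact Module.Finite.of_surjective (Quotient.factorₐ k hIm).toLinearMap
    (Quotient.factor_surjective hIm)

end Ideal

theorem stmt2_general {N : Type*} [CommRing N] [Algebra ℝ N]
    (I : Ideal N) [FiniteDimensional ℝ (N ⧸ I)]
    (J : Ideal N)
    (hJ : J = sInf {m : Ideal N | m.IsMaximal ∧ I ≤ m ∧ FiniteDimensional ℝ (N ⧸ m)})
    (n : ℕ)
    (hstab : I ⊔ J ^ n = I ⊔ J ^ (n + 1)) :
    J ^ n ≤ I ∧ J ≤ I.radical := by
  have : IsNoetherianRing (N ⧸ I) := isNoetherian_of_tower ℝ inferInstance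
  have hJn : J ^ n ≤ I :=
    Ideal.pow_le_of_sup_pow_eq_sup_pow_succ
      (hJ.trans (Ideal.jacobson_eq_sInf_finiteDimensional I).symm).le hstab
  exact ⟨hJn, fun x hx => ⟨n, hJn (Ideal.pow_mem_pow hx n)⟩⟩

/-- Let `N` be a commutative unital `ℝ`-algebra and `I` an ideal of finite codimension
`s > 0`.  Let `J` be the intersection of all maximal finite-codimensional ideals of `N`
containing `I`, and suppose `I + Jⁿ = I + J^(n+1)` for some `n ≥ 1`.  Then `Jⁿ ⊆ I`, and
hence `J ⊆ √I`. -/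
theorem stmt2 {N : Type*} [CommRing N] [Algebra ℝ N]
    (I : Ideal N) [FiniteDimensional ℝ (N ⧸ I)]
    (hs : 0 < Module.finrank ℝ (N ⧸ I))
    (J : Ideal N)
    (hJ : J = sInf {m : Ideal N | m.IsMaximal ∧ I ≤ m ∧ FiniteDimensional ℝ (N ⧸ m)})
    (n : ℕ) (hn : 1 ≤ n)
    (hstab : I ⊔ J ^ n = I ⊔ J ^ (n + 1)) :
    J ^ n ≤ I ∧ J ≤ I.radical :=
  stmt2_general I J hJ n hstab
end

section
/- Let N be a commutative ℝ-algebra in which every finite-codimensional maximal ideal m satisfies N/m ≅ ℝ, and let I be an ideal of finite codimension s > 0. Then the radical √I equals the intersection of the (finitely many, at most s) finite-codimensional maximal ideals containing I, and (√I)^s ⊆ I. -/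
/-!
Every prime containing `I` has a finite-dimensional quotient, which is an Artinian domain and
hence a field; so the primes over `I` are exactly the finite-codimensional maximal ideals over
`I`, and `√I` is their intersection. The image of `√I` in the Artinian ring `N ⧸ I` is its
nilradical, a nilpotent ideal. The powers of a nilpotent ideal strictly decrease until they
vanish, so as subspaces of `N ⧸ I` they reach `0` after at most `dim (N ⧸ I)` steps.
-/

open Module

theorem IsNilpotent.pow_eq_zero_of_pow_succ_eq {M : Type*} [MonoidWithZero M] {x : M}
    (hx : IsNilpotent x) {i : ℕ} (h : x ^ (i + 1) = x ^ i) : x ^ i = 0 := by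
  obtain ⟨n, hn⟩ := hx
  have stable : ∀ k, x ^ (i + k) = x ^ i := by
    intro k
    induction k with
    | zero => rfl
    | succ k ih => rw [← add_assoc, _root_.pow_succ, ih, ← _root_.pow_succ, h]
  rw [← stable n, pow_add, hn, mul_zero]

namespace Ideal

variable {K R : Type*} [Field K] [CommRing R] [Algebra K R]

theorem finiteDimensional_quotient_of_le {I J : Ideal R} (h : I ≤ J)
    [FiniteDimensional K (R ⧸ I)] : FiniteDimensional K (R ⧸ J) :=
  Module.Finite.of_surjective (Quotient.factorₐ K h).toLinearMap (Quotient.factor_surjective h)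

variable (K) in
theorem IsPrime.isMaximal_of_finiteDimensional {p : Ideal R} (hp : p.IsPrime)
    [FiniteDimensional K (R ⧸ p)] : p.IsMaximal :=
  have := IsArtinianRing.of_finite K (R ⧸ p)
  Quotient.maximal_of_isField _ (IsArtinianRing.isField_of_isDomain _)

theorem radical_eq_sInf_isMaximal_finiteDimensional (I : Ideal R)
    [FiniteDimensional K (R ⧸ I)] :
    I.radical = sInf {m : Ideal R | m.IsMaximal ∧ I ≤ m ∧ FiniteDimensional K (R ⧸ m)} := by
  rw [radical_eq_sInf]
  congr 1
  ext m
  constructor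
  · rintro ⟨hIm, hm⟩
    have := finiteDimensional_quotient_of_le (K := K) hIm
    exact ⟨hm.isMaximal_of_finiteDimensional K, hIm, this⟩
  · rintro ⟨hm, hIm, -⟩
    exact ⟨hIm, hm.isPrime⟩

theorem pow_finrank_eq_bot_of_isNilpotent [FiniteDimensional K R] {J : Ideal R}
    (hJ : IsNilpotent J) : J ^ finrank K R = ⊥ := by
  have descent : ∀ i, J ^ i ≠ ⊥ → i + finrank K ((J ^ i).restrictScalars K) ≤ finrank K R := by
    intro i
    induction i with
    | zero =>
      intro _
      rw [pow_zero, one_eq_top, Submodule.restrictScalars_top, finrank_top, zero_add]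
    | succ i ih =>
      intro hne
      have hlt : J ^ (i + 1) < J ^ i :=
        (pow_le_pow_right i.le_succ).lt_of_ne fun h ↦ hne (h ▸ hJ.pow_eq_zero_of_pow_succ_eq h)
      have := Submodule.finrank_lt_finrank_of_lt (Submodule.restrictScalars_lt K |>.mpr hlt)
      have := ih fun h ↦ hne (eq_bot_mono hlt.le h)
      omega
  by_contra hne
  have := descent _ hne
  have hzero : (J ^ finrank K R).restrictScalars K = ⊥ := Submodule.finrank_eq_zero.mp (by omega)
  exact hne (by simpa using hzero)

theorem radical_pow_finrank_quotient_le (I : Ideal R) [FiniteDimensional K (R ⧸ I)] :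
    I.radical ^ finrank K (R ⧸ I) ≤ I := by
  have := IsArtinianRing.of_finite K (R ⧸ I)
  have hmap : I.radical.map (Quotient.mk I) = nilradical (R ⧸ I) := by
    rw [map_radical_of_surjective Quotient.mk_surjective mk_ker.le, map_quotient_self]
    rfl
  refine ((map_eq_bot_iff_le_ker _).mp ?_).trans mk_ker.le
  rw [Ideal.map_pow, hmap]
  exact pow_finrank_eq_bot_of_isNilpotent IsArtinianRing.isNilpotent_nilradical

end Ideal

theorem stmt4_general {N : Type*} [CommRing N] [Algebra ℝ N]
    (I : Ideal N) [FiniteDimensional ℝ (N ⧸ I)] :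
    I.radical = sInf {m : Ideal N | m.IsMaximal ∧ I ≤ m ∧ FiniteDimensional ℝ (N ⧸ m)} ∧
      I.radical ^ (Module.finrank ℝ (N ⧸ I)) ≤ I :=
  ⟨I.radical_eq_sInf_isMaximal_finiteDimensional, I.radical_pow_finrank_quotient_le⟩

/-- Let `N` be a commutative unital `ℝ`-algebra in which every finite-codimensional maximal
ideal `m` satisfies `N ⧸ m ≅ ℝ`, and let `I` be an ideal of finite codimension `s > 0`.
Then the radical `√I` equals the intersection of the finite-codimensional maximal ideals
containing `I`, and `(√I) ^ s ⊆ I`. -/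
theorem stmt4 {N : Type*} [CommRing N] [Algebra ℝ N]
    (hres : ∀ m : Ideal N, m.IsMaximal → FiniteDimensional ℝ (N ⧸ m) →
      Module.finrank ℝ (N ⧸ m) = 1)
    (I : Ideal N) [FiniteDimensional ℝ (N ⧸ I)]
    (hs : 0 < Module.finrank ℝ (N ⧸ I)) :
    I.radical = sInf {m : Ideal N | m.IsMaximal ∧ I ≤ m ∧ FiniteDimensional ℝ (N ⧸ m)} ∧
      I.radical ^ (Module.finrank ℝ (N ⧸ I)) ≤ I :=
  stmt4_general I
end

section
/- Let g be a finite-dimensional real Lie algebra and let K be the Lie algebra C^∞(M, g) of smooth g-valued functions on a manifold M with pointwise bracket. Then the derived algebra [K, K] equals C^∞(M, [g,g]). -/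
open scoped Manifold

/-!
A bracket of two smooth maps is smooth, because in coordinates it is a bilinear map applied to
smooth maps, and it takes values in `[g, g]`; so the span of such brackets consists of smooth maps
into `[g, g]`. Conversely, expanding a smooth map `h` into `[g, g]` in a basis of `[g, g]` writes
it as `∑ aᵢ • cᵢ` with smooth coefficients `aᵢ`; each `cᵢ` is a linear combination of brackets
`⁅u, v⁆`, and `aᵢ • ⁅u, v⁆` is the bracket of the smooth maps `aᵢ • u` and the constant `v`.
-/

section Bilinear

variable {𝕜 : Type*} [NontriviallyNormedField 𝕜] [CompleteSpace 𝕜]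
  {E : Type*} [NormedAddCommGroup E] [NormedSpace 𝕜 E]
  {H : Type*} [TopologicalSpace H] {I : ModelWithCorners 𝕜 E H}
  {M : Type*} [TopologicalSpace M] [ChartedSpace H M] {n : WithTop ℕ∞}
  {V₁ : Type*} [NormedAddCommGroup V₁] [NormedSpace 𝕜 V₁] [FiniteDimensional 𝕜 V₁]
  {V₂ : Type*} [NormedAddCommGroup V₂] [NormedSpace 𝕜 V₂] [FiniteDimensional 𝕜 V₂]
  {W : Type*} [NormedAddCommGroup W] [NormedSpace 𝕜 W]

theorem ContMDiff.linearMap₂_apply (β : V₁ →ₗ[𝕜] V₂ →ₗ[𝕜] W) {f₁ : M → V₁} {f₂ : M → V₂}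
    (hf₁ : ContMDiff I 𝓘(𝕜, V₁) n f₁) (hf₂ : ContMDiff I 𝓘(𝕜, V₂) n f₂) :
    ContMDiff I 𝓘(𝕜, W) n fun x => β (f₁ x) (f₂ x) :=
  (β.toContinuousBilinearMap.contMDiff.comp hf₁).clm_apply hf₂

end Bilinear

section Coordinates

variable {𝕜 : Type*} [NontriviallyNormedField 𝕜]
  {E : Type*} [NormedAddCommGroup E] [NormedSpace 𝕜 E]
  {H : Type*} [TopologicalSpace H] (I : ModelWithCorners 𝕜 E H)
  {M : Type*} [TopologicalSpace M] [ChartedSpace H M] (n : WithTop ℕ∞)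
  {g : Type*} [AddCommGroup g] [Module 𝕜 g] {ι : Type*} [Fintype ι] (b : Module.Basis ι 𝕜 g)

/-- `g` carries no topology; smoothness of `g`-valued maps is read off in the coordinates of `b`. -/
def ContMDiffInCoords (f : M → g) : Prop :=
  ContMDiff I 𝓘(𝕜, ι → 𝕜) n fun x => b.equivFun (f x)

variable {I n b}

theorem ContMDiffInCoords.linearMap_comp [CompleteSpace 𝕜]
    {V : Type*} [NormedAddCommGroup V] [NormedSpace 𝕜 V] (φ : g →ₗ[𝕜] V) {f : M → g}
    (hf : ContMDiffInCoords I n b f) :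
    ContMDiff I 𝓘(𝕜, V) n fun x => φ (f x) := by
  convert (φ ∘ₗ b.equivFun.symm.toLinearMap).toContinuousLinearMap.contMDiff.comp hf using 1
  funext x
  exact congrArg φ (b.equivFun.symm_apply_apply (f x)).symm

theorem ContMDiffInCoords.linearMap₂_apply [CompleteSpace 𝕜]
    {g' : Type*} [AddCommGroup g'] [Module 𝕜 g']
    {ι' : Type*} [Fintype ι'] {b' : Module.Basis ι' 𝕜 g'}
    {V : Type*} [NormedAddCommGroup V] [NormedSpace 𝕜 V] (β : g →ₗ[𝕜] g' →ₗ[𝕜] V)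
    {f₁ : M → g} {f₂ : M → g'} (hf₁ : ContMDiffInCoords I n b f₁)
    (hf₂ : ContMDiffInCoords I n b' f₂) :
    ContMDiff I 𝓘(𝕜, V) n fun x => β (f₁ x) (f₂ x) := by
  convert ContMDiff.linearMap₂_apply
    (β.compl₁₂ b.equivFun.symm.toLinearMap b'.equivFun.symm.toLinearMap) hf₁ hf₂ using 1
  funext x
  simp only [LinearMap.compl₁₂_apply, LinearEquiv.coe_coe, LinearEquiv.symm_apply_apply]

theorem contMDiffInCoords_const (z : g) : ContMDiffInCoords I n b fun _ : M => z :=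
  contMDiff_const

theorem ContMDiff.contMDiffInCoords_smul_const {a : M → 𝕜} (ha : ContMDiff I 𝓘(𝕜, 𝕜) n a)
    (z : g) : ContMDiffInCoords I n b fun x => a x • z := by
  unfold ContMDiffInCoords
  simp only [map_smul]
  exact ha.smul contMDiff_const

variable (I n b)

def contMDiffMapsInto (D : Submodule 𝕜 g) : Submodule 𝕜 (M → g) where
  carrier := {h | ContMDiffInCoords I n b h ∧ ∀ x, h x ∈ D}
  zero_mem' := ⟨by simpa [ContMDiffInCoords] using contMDiff_const, fun _ => D.zero_mem⟩
  add_mem' := by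
    rintro h₁ h₂ ⟨hs₁, hD₁⟩ ⟨hs₂, hD₂⟩
    refine ⟨?_, fun x => D.add_mem (hD₁ x) (hD₂ x)⟩
    unfold ContMDiffInCoords at *
    simp only [Pi.add_apply, map_add]
    exact hs₁.add hs₂
  smul_mem' := by
    rintro r h ⟨hs, hD⟩
    refine ⟨?_, fun x => D.smul_mem r (hD x)⟩
    unfold ContMDiffInCoords at *
    simp only [Pi.smul_apply, map_smul]
    exact (contMDiff_const (I' := 𝓘(𝕜, 𝕜)) (c := r)).smul hs

theorem contMDiffMapsInto_le_span_smul_const [CompleteSpace 𝕜] (D : Submodule 𝕜 g) :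
    contMDiffMapsInto I n b D ≤ Submodule.span 𝕜
      {h | ∃ a : M → 𝕜, ContMDiff I 𝓘(𝕜, 𝕜) n a ∧ ∃ z ∈ D, h = fun x => a x • z} := by
  rintro h ⟨hs, hD⟩
  have : Module.Finite 𝕜 g := Module.Finite.of_basis b
  let c := Module.finBasis 𝕜 D
  obtain ⟨p, hp⟩ := D.subtype.exists_leftInverse_of_injective D.ker_subtype
  have hp_apply (x : M) : (p (h x) : g) = h x :=
    congrArg Subtype.val (LinearMap.congr_fun hp ⟨h x, hD x⟩)
  have hdec : h = ∑ i, fun x => c.coord i (p (h x)) • (c i : g) := by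
    funext x
    conv_lhs => rw [← hp_apply x, ← c.sum_repr (p (h x))]
    simp only [Finset.sum_apply, Submodule.coe_sum, Submodule.coe_smul, Module.Basis.coord_apply]
  rw [hdec]
  refine Submodule.sum_mem _ fun i _ => Submodule.subset_span ?_
  exact ⟨_, hs.linearMap_comp (c.coord i ∘ₗ p), c i, (c i).2, rfl⟩

end Coordinates

theorem LieAlgebra.lie_mem_derivedSeries_one {R L : Type*} [CommRing R] [LieRing L]
    [LieAlgebra R L] (u v : L) : ⁅u, v⁆ ∈ derivedSeries R L 1 :=
  (coe_derivedSeries_one_eq R L).ge (Submodule.subset_span ⟨u, v, rfl⟩)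

section LieAlgebra

variable {𝕜 : Type*} [NontriviallyNormedField 𝕜] [CompleteSpace 𝕜]
  {E : Type*} [NormedAddCommGroup E] [NormedSpace 𝕜 E]
  {H : Type*} [TopologicalSpace H] {I : ModelWithCorners 𝕜 E H}
  {M : Type*} [TopologicalSpace M] [ChartedSpace H M] {n : WithTop ℕ∞}
  {g : Type*} [LieRing g] [LieAlgebra 𝕜 g] {ι : Type*} [Fintype ι] {b : Module.Basis ι 𝕜 g}

theorem ContMDiffInCoords.lie {f₁ f₂ : M → g} (hf₁ : ContMDiffInCoords I n b f₁)
    (hf₂ : ContMDiffInCoords I n b f₂) : ContMDiffInCoords I n b fun x => ⁅f₁ x, f₂ x⁆ :=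
  hf₁.linearMap₂_apply
    ((LieModule.toEnd 𝕜 g g : g →ₗ[𝕜] Module.End 𝕜 g).compr₂ b.equivFun.toLinearMap) hf₂

variable (I n b) in
theorem span_lie_eq_contMDiffMapsInto_derivedSeries :
    Submodule.span 𝕜 {h : M → g | ∃ f₁ f₂ : M → g, ContMDiffInCoords I n b f₁ ∧
      ContMDiffInCoords I n b f₂ ∧ h = fun x => ⁅f₁ x, f₂ x⁆} =
      contMDiffMapsInto I n b (LieAlgebra.derivedSeries 𝕜 g 1) := by
  refine le_antisymm (Submodule.span_le.mpr ?_)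
    ((contMDiffMapsInto_le_span_smul_const I n b _).trans (Submodule.span_le.mpr ?_))
  · rintro _ ⟨f₁, f₂, hf₁, hf₂, rfl⟩
    exact ⟨hf₁.lie hf₂, fun _ => LieAlgebra.lie_mem_derivedSeries_one _ _⟩
  · rintro _ ⟨a, ha, z, hz, rfl⟩
    let smulBy : g →ₗ[𝕜] M → g := LinearMap.pi fun x => a x • LinearMap.id
    suffices Submodule.span 𝕜 {⁅u, v⁆ | (u : g) (v : g)} ≤ (Submodule.span 𝕜 _).comap smulBy from
      this ((LieAlgebra.coe_derivedSeries_one_eq 𝕜 g).le hz)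
    rw [Submodule.span_le]
    rintro _ ⟨u, v, rfl⟩
    refine Submodule.subset_span ⟨fun x => a x • u, fun _ => v,
      ha.contMDiffInCoords_smul_const u, contMDiffInCoords_const v, ?_⟩
    funext x
    simp [smulBy, smul_lie]

end LieAlgebra

theorem stmt5_general {E : Type*} [NormedAddCommGroup E] [NormedSpace ℝ E]
    {H : Type*} [TopologicalSpace H] (I : ModelWithCorners ℝ E H)
    {M : Type*} [TopologicalSpace M] [ChartedSpace H M]
    {g : Type*} [LieRing g] [LieAlgebra ℝ g]
    {ι : Type*} [Fintype ι] (b : Module.Basis ι ℝ g) :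
    (Submodule.span ℝ
        {h : M → g | ∃ f₁ f₂ : M → g,
          ContMDiff I 𝓘(ℝ, ι → ℝ) (⊤ : ℕ∞) (fun x => b.equivFun (f₁ x)) ∧
          ContMDiff I 𝓘(ℝ, ι → ℝ) (⊤ : ℕ∞) (fun x => b.equivFun (f₂ x)) ∧
          h = fun x => ⁅f₁ x, f₂ x⁆} : Set (M → g)) =
      {h : M → g | ContMDiff I 𝓘(ℝ, ι → ℝ) (⊤ : ℕ∞) (fun x => b.equivFun (h x)) ∧
        ∀ x, h x ∈ LieAlgebra.derivedSeries ℝ g 1} :=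
  congrArg SetLike.coe (span_lie_eq_contMDiffMapsInto_derivedSeries I (⊤ : ℕ∞) b)

/-- Let `g` be a finite-dimensional real Lie algebra and `K = C^∞(M, g)` the Lie algebra of
smooth `g`-valued functions on a manifold `M` with pointwise bracket (smoothness is read off
through the coordinates of a basis `b` of `g`).  Then the derived algebra `[K, K]`, i.e. the
span of pointwise brackets of smooth functions, equals `C^∞(M, [g,g])`, the set of smooth
functions with values in the derived ideal of `g`. -/
theorem stmt5 {E : Type*} [NormedAddCommGroup E] [NormedSpace ℝ E]
    {H : Type*} [TopologicalSpace H] (I : ModelWithCorners ℝ E H)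
    {M : Type*} [TopologicalSpace M] [ChartedSpace H M] [IsManifold I (⊤ : ℕ∞) M]
    {g : Type*} [LieRing g] [LieAlgebra ℝ g] [FiniteDimensional ℝ g]
    {ι : Type*} [Fintype ι] (b : Module.Basis ι ℝ g) :
    (Submodule.span ℝ
        {h : M → g | ∃ f₁ f₂ : M → g,
          ContMDiff I 𝓘(ℝ, ι → ℝ) (⊤ : ℕ∞) (fun x => b.equivFun (f₁ x)) ∧
          ContMDiff I 𝓘(ℝ, ι → ℝ) (⊤ : ℕ∞) (fun x => b.equivFun (f₂ x)) ∧
          h = fun x => ⁅f₁ x, f₂ x⁆} : Set (M → g)) =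
      {h : M → g | ContMDiff I 𝓘(ℝ, ι → ℝ) (⊤ : ℕ∞) (fun x => b.equivFun (h x)) ∧
        ∀ x, h x ∈ LieAlgebra.derivedSeries ℝ g 1} :=
  stmt5_general I b
end

section
/- Let K be a Lie algebra that is also a module over a commutative unital ring N, with N-bilinear bracket, and suppose K = [K, K]. Then every maximal finite-codimensional Lie ideal K₀ of K is an N-submodule: N·K₀ = K₀. -/
/-!
The normalizer of `K₀`, the Lie ideal of those `x` with `⁅K, x⁆ ⊆ K₀`, contains `K₀` and so has
finite codimension; it is proper because `K` is perfect, hence equals `K₀` by maximality. For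
`k ∈ K₀`, `N`-bilinearity gives `⁅y, f • k⁆ = ⁅f • y, k⁆ ∈ K₀`, so `f • k` lies in the normalizer.
-/

namespace LieIdeal

variable {R L : Type*} [CommRing R] [LieRing L] [LieAlgebra R L]

theorem normalizer_ne_top_of_derivedSeries_one_eq_top {I : LieIdeal R L} (hI : I ≠ ⊤)
    (hperf : LieAlgebra.derivedSeries R L 1 = ⊤) : I.normalizer ≠ ⊤ := by
  intro htop
  apply hI
  rw [eq_top_iff, ← hperf, LieAlgebra.derivedSeries_def, LieAlgebra.derivedSeriesOfIdeal_succ,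
    LieAlgebra.derivedSeriesOfIdeal_zero, LieSubmodule.top_lie_le_iff_le_normalizer, htop]

theorem smul_mem_normalizer {N : Type*} [Monoid N] [DistribMulAction N L]
    (hbil : ∀ (f : N) (x y : L), ⁅f • x, y⁆ = f • ⁅x, y⁆) (I : LieIdeal R L) {x : L}
    (hx : x ∈ I) (f : N) : f • x ∈ I.normalizer := by
  intro y
  have hswap : ⁅y, f • x⁆ = ⁅f • y, x⁆ := by
    rw [← lie_skew, hbil, ← smul_neg, lie_skew, ← hbil]
  rw [hswap]
  exact I.lie_mem hx

end LieIdeal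

theorem stmt9_general {N K : Type*} [CommRing N]
    [LieRing K] [LieAlgebra ℝ K] [Module N K]
    (hbil : ∀ (f : N) (k k' : K), ⁅f • k, k'⁆ = f • ⁅k, k'⁆)
    (hperf : LieAlgebra.derivedSeries ℝ K 1 = ⊤)
    (K₀ : LieIdeal ℝ K) (hK₀ : K₀ ≠ ⊤)
    [FiniteDimensional ℝ (K ⧸ K₀.toSubmodule)]
    (hmax : ∀ J : LieIdeal ℝ K, K₀ ≤ J → J ≠ ⊤ →
      FiniteDimensional ℝ (K ⧸ J.toSubmodule) → J = K₀) :
    ∀ (f : N) (k : K), k ∈ K₀ → f • k ∈ K₀ := by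
  have hle : K₀ ≤ K₀.normalizer := LieSubmodule.le_normalizer K₀
  have hnormalizer : K₀.normalizer = K₀ :=
    hmax _ hle (LieIdeal.normalizer_ne_top_of_derivedSeries_one_eq_top hK₀ hperf)
      (Submodule.CoFG.of_le hle ‹_›)
  intro f k hk
  exact hnormalizer ▸ LieIdeal.smul_mem_normalizer hbil K₀ hk f

/-- Let `K` be a Lie algebra over `ℝ` that is also a module over a commutative unital
`ℝ`-algebra `N`, with `N`-bilinear Lie bracket, and suppose `K` is perfect, `K = [K,K]`.
Then every maximal finite-codimensional Lie ideal `K₀` of `K` is an `N`-submodule: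
`N • K₀ = K₀`. -/
theorem stmt9 {N K : Type*} [CommRing N] [Algebra ℝ N]
    [LieRing K] [LieAlgebra ℝ K] [Module N K]
    (hbil : ∀ (f : N) (k k' : K), ⁅f • k, k'⁆ = f • ⁅k, k'⁆)
    (hperf : LieAlgebra.derivedSeries ℝ K 1 = ⊤)
    (K₀ : LieIdeal ℝ K) (hK₀ : K₀ ≠ ⊤)
    [FiniteDimensional ℝ (K ⧸ K₀.toSubmodule)]
    (hmax : ∀ J : LieIdeal ℝ K, K₀ ≤ J → J ≠ ⊤ →
      FiniteDimensional ℝ (K ⧸ J.toSubmodule) → J = K₀) :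
    ∀ (f : N) (k : K), k ∈ K₀ → f • k ∈ K₀ :=
  stmt9_general hbil hperf K₀ hK₀ hmax
end

section
/- With A = 𝔛(M) × C^∞(M, g) the trivial Atiyah algebroid bracket and g semisimple, fix m ∈ M. If A₀ ⊆ A is a Lie subalgebra with [A₀, K] ⊆ K(m), where K = {0} × C^∞(M, g) and K(m) = {(0, η) : η(m) = 0}, then every (X, γ) ∈ A₀ satisfies X(m) = 0 and γ(m) = 0. -/
/-- Directional derivative of a `g`-valued function along a vector field, through the
coordinates of a basis `b` of `g`. -/
noncomputable def lieDer {E : Type*} [NormedAddCommGroup E] [NormedSpace ℝ E]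
    {g : Type*} [LieRing g] [LieAlgebra ℝ g] [FiniteDimensional ℝ g]
    {ι : Type*} [Fintype ι] (b : Module.Basis ι ℝ g)
    (X : E → E) (η : E → g) (x : E) : g :=
  b.equivFun.symm (fderiv ℝ (fun y => b.equivFun (η y)) x (X x))

lemma lieDer_const {E : Type*} [NormedAddCommGroup E] [NormedSpace ℝ E]
    {g : Type*} [LieRing g] [LieAlgebra ℝ g] [FiniteDimensional ℝ g]
    {ι : Type*} [Fintype ι] (b : Module.Basis ι ℝ g)
    (X : E → E) (c : g) (x : E) : lieDer b X (fun _ => c) x = 0 := by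
  simp [lieDer, fderiv_fun_const]

lemma lieDer_lin {E : Type*} [NormedAddCommGroup E] [NormedSpace ℝ E]
    {g : Type*} [LieRing g] [LieAlgebra ℝ g] [FiniteDimensional ℝ g]
    {ι : Type*} [Fintype ι] (b : Module.Basis ι ℝ g)
    (X : E → E) (ℓ : E →L[ℝ] ℝ) (v : g) (x : E) :
    lieDer b X (fun y => ℓ y • v) x = ℓ (X x) • v := by
  have h : (fun y => b.equivFun ((ℓ y) • v)) = ⇑(ℓ.smulRight (b.equivFun v)) := by
    ext y
    simp [map_smul, Module.Basis.sum_repr]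
  rw [lieDer, h, ContinuousLinearMap.fderiv]
  simp [map_smul, Module.Basis.sum_repr]

/-- With `A = 𝔛(M) × C^∞(M, g)` the trivial Atiyah algebroid (here `M = E` a
finite-dimensional vector space) with bracket `[(X,γ),(Y,η)] = ([X,Y],[γ,η]_g + X(η) − Y(γ))`
and `g` semisimple (and nontrivial), fix `m ∈ M`.  If `A₀ ⊆ A` is a Lie subalgebra with
`[A₀, K] ⊆ K(m)`, where `K = {0} × C^∞(M,g)` and `K(m) = {(0,η) : η(m) = 0}`, then every
`(X, γ) ∈ A₀` satisfies `X(m) = 0` and `γ(m) = 0`. -/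
theorem stmt14 {E : Type*} [NormedAddCommGroup E] [NormedSpace ℝ E]
    [FiniteDimensional ℝ E]
    {g : Type*} [LieRing g] [LieAlgebra ℝ g] [FiniteDimensional ℝ g]
    [LieAlgebra.IsSemisimple ℝ g] [Nontrivial g]
    {ι : Type*} [Fintype ι] (b : Module.Basis ι ℝ g)
    (m : E) (A₀ : Set ((E → E) × (E → g)))
    -- members of `A₀` are smooth sections:
    (hsm : ∀ a ∈ A₀, ContDiff ℝ (⊤ : ℕ∞) a.1 ∧ ContDiff ℝ (⊤ : ℕ∞) (fun y => b.equivFun (a.2 y)))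
    -- `A₀` is a Lie subalgebra:
    (hsub : ∀ a ∈ A₀, ∀ a' ∈ A₀,
      ((fun x => fderiv ℝ a'.1 x (a.1 x) - fderiv ℝ a.1 x (a'.1 x)),
        (fun x => ⁅a.2 x, a'.2 x⁆ + lieDer b a.1 a'.2 x - lieDer b a'.1 a.2 x)) ∈ A₀)
    -- `[A₀, K] ⊆ K(m)`:
    (hbr : ∀ a ∈ A₀, ∀ η : E → g, ContDiff ℝ (⊤ : ℕ∞) (fun y => b.equivFun (η y)) →
      ⁅a.2 m, η m⁆ + lieDer b a.1 η m = 0) :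
    ∀ a ∈ A₀, a.1 m = 0 ∧ a.2 m = 0 := by
  intro a ha
  -- Step 1: γ(m) = 0, by testing against constant sections.
  have hγ : a.2 m = 0 := by
    have hcen : a.2 m ∈ LieAlgebra.center ℝ g := by
      intro c
      have := hbr a ha (fun _ => c) contDiff_const
      rw [lieDer_const] at this
      have h0 : ⁅a.2 m, c⁆ = 0 := by simpa using this
      rw [← lie_skew, h0, neg_zero]
    rw [LieAlgebra.center_eq_bot ℝ g] at hcen
    simpa using hcen
  refine ⟨?_, hγ⟩
  -- Step 2: X(m) = 0, by testing against linear sections.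
  obtain ⟨v, hv⟩ := exists_ne (0 : g)
  apply NormedSpace.eq_zero_of_forall_dual_eq_zero ℝ
  intro ℓ
  have hsmooth : ContDiff ℝ (⊤ : ℕ∞) (fun y => b.equivFun ((ℓ y) • v)) := by
    have h : (fun y => b.equivFun ((ℓ y) • v)) = ⇑(ℓ.smulRight (b.equivFun v)) := by
      ext y; simp [map_smul]
    rw [h]
    exact (ℓ.smulRight (b.equivFun v)).contDiff
  have := hbr a ha (fun y => ℓ y • v) hsmooth
  rw [lieDer_lin, hγ, zero_lie, zero_add] at this
  rcases smul_eq_zero.mp this with h | h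
  · exact h
  · exact absurd h hv
end

section
/- Let M be a smooth manifold and 𝔛(M) its Lie algebra of vector fields. The normalizer in A = 𝔛(M) × C^∞(M, g) (trivial Atiyah algebroid bracket, g semisimple) of the ideal K(m, g₀) = {(0,η) : η(m) ∈ g₀}, for g₀ a maximal proper ideal of g, is A_m = {(X, γ) ∈ A : X(m) = 0}. -/
/-- The normalizer in `A = 𝔛(M) × C^∞(M, g)` (trivial Atiyah algebroid bracket, `g`
semisimple, here `M = E` a finite-dimensional vector space) of the ideal
`K(m, g₀) = {(0,η) : η(m) ∈ g₀}`, for `g₀` a maximal proper Lie ideal of `g`, is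
`A_m = {(X, γ) ∈ A : X(m) = 0}`. -/
theorem stmt15 {E : Type*} [NormedAddCommGroup E] [NormedSpace ℝ E]
    [FiniteDimensional ℝ E]
    {g : Type*} [LieRing g] [LieAlgebra ℝ g] [FiniteDimensional ℝ g]
    [LieAlgebra.IsSemisimple ℝ g]
    {ι : Type*} [Fintype ι] (b : Module.Basis ι ℝ g)
    (m : E) (g₀ : LieIdeal ℝ g) (hg₀ : IsCoatom g₀) :
    {a : (E → E) × (E → g) |
        (ContDiff ℝ (⊤ : ℕ∞) a.1 ∧ ContDiff ℝ (⊤ : ℕ∞) (fun y => b.equivFun (a.2 y))) ∧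
        ∀ η : E → g, ContDiff ℝ (⊤ : ℕ∞) (fun y => b.equivFun (η y)) → η m ∈ g₀ →
          ⁅a.2 m, η m⁆ + lieDer b a.1 η m ∈ g₀} =
      {a : (E → E) × (E → g) |
        (ContDiff ℝ (⊤ : ℕ∞) a.1 ∧ ContDiff ℝ (⊤ : ℕ∞) (fun y => b.equivFun (a.2 y))) ∧ a.1 m = 0} := by
  ext a
  obtain ⟨X, γ⟩ := a
  simp only [Set.mem_setOf_eq]
  constructor
  · rintro ⟨hsmooth, hnorm⟩
    refine ⟨hsmooth, ?_⟩
    by_contra hXm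
    -- pick v ∉ g₀
    obtain ⟨v, hv⟩ : ∃ v : g, v ∉ g₀ := by
      by_contra h
      push_neg at h
      exact hg₀.1 (by ext x; simp [h x])
    -- pick a functional nonvanishing on X m
    obtain ⟨φ, hφnorm, hφ⟩ := exists_dual_vector ℝ (X m) (norm_ne_zero_iff.mpr hXm)
    have hφX : φ (X m) ≠ 0 := by
      rw [hφ]
      exact_mod_cast norm_ne_zero_iff.mpr hXm
    set η : E → g := fun y => (φ y - φ m) • v with hη
    have hD : HasFDerivAt (fun y => (φ y - φ m) • b.equivFun v)
        (φ.smulRight (b.equivFun v)) m :=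
      ((φ.hasFDerivAt.sub_const (φ m))).smul_const (b.equivFun v)
    have hcoord : (fun y => b.equivFun (η y)) = fun y => (φ y - φ m) • b.equivFun v := by
      funext y; simp [hη]
    have hsm : ContDiff ℝ (⊤ : ℕ∞) (fun y => b.equivFun (η y)) := by
      rw [hcoord]
      exact (φ.contDiff.sub contDiff_const).smul contDiff_const
    have hηm : η m ∈ g₀ := by simp [hη]
    have := hnorm η hsm hηm
    have hlie : lieDer b X η m = φ (X m) • v := by
      rw [lieDer, hcoord, hD.fderiv]
      simp only [ContinuousLinearMap.smulRight_apply, map_smul, Module.Basis.equivFun_symm_apply]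
      congr 1
      exact b.sum_repr v
    rw [hlie] at this
    simp only [hη, sub_self, zero_smul, lie_zero, zero_add] at this
    exact hv (by
      have := g₀.smul_mem (φ (X m))⁻¹ this
      rwa [smul_smul, inv_mul_cancel₀ hφX, one_smul] at this)
  · rintro ⟨hsmooth, hXm⟩
    refine ⟨hsmooth, fun η hsm hηm => ?_⟩
    have : lieDer b X η m = 0 := by
      rw [lieDer, hXm]
      simp
    rw [this, add_zero]
    exact g₀.lie_mem hηm
end

section
/- Let Z be a finite-dimensional real vector space and consider the abelian Lie algebra 𝒵 = C^∞(M, Z) acted on by 𝔛(M) via Lie derivative. For any point m ∈ M, {c ∈ 𝒵 : c(m) = 0} = span{X(c) : X ∈ 𝔛(M) with X(m) = 0, c ∈ 𝒵}. -/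
/-- Let `Z` be a finite-dimensional real vector space and consider the abelian Lie algebra
`𝒵 = C^∞(M, Z)` acted on by `𝔛(M)` via Lie derivative (here `M = E` a finite-dimensional
vector space, vector fields are smooth maps `E → E`, and smoothness of `Z`-valued maps is
read through the coordinates of a basis `bz` of `Z`).  For any point `m ∈ M`,
`{c ∈ 𝒵 : c(m) = 0} = span{X(c) : X ∈ 𝔛(M), X(m) = 0, c ∈ 𝒵}`. -/
theorem stmt17 {E : Type*} [NormedAddCommGroup E] [NormedSpace ℝ E]
    [FiniteDimensional ℝ E]
    {Z : Type*} [AddCommGroup Z] [Module ℝ Z] [FiniteDimensional ℝ Z]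
    {κ : Type*} [Fintype κ] (bz : Module.Basis κ ℝ Z) (m : E) :
    (Submodule.span ℝ
        {h : E → Z | ∃ (X : E → E) (c : E → Z),
          ContDiff ℝ (⊤ : ℕ∞) X ∧ ContDiff ℝ (⊤ : ℕ∞) (fun y => bz.equivFun (c y)) ∧ X m = 0 ∧
          h = fun x => bz.equivFun.symm
            (fderiv ℝ (fun y => bz.equivFun (c y)) x (X x))} : Set (E → Z)) =
      {c : E → Z | ContDiff ℝ (⊤ : ℕ∞) (fun y => bz.equivFun (c y)) ∧ c m = 0} := by
  classical
  apply Set.Subset.antisymm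
  · intro h hh
    induction hh using Submodule.span_induction with
    | mem x hx =>
      obtain ⟨X, c, hX, hc, hXm, rfl⟩ := hx
      refine ⟨?_, ?_⟩
      · have h1 : ContDiff ℝ (⊤ : ℕ∞) (fun y => fderiv ℝ (fun y => bz.equivFun (c y)) y (X y)) :=
          (hc.fderiv_right (by simp)).clm_apply hX
        simpa only [LinearEquiv.apply_symm_apply] using h1
      · simp [hXm]
    | zero =>
      exact ⟨by simpa using (contDiff_const : ContDiff ℝ (⊤ : ℕ∞) fun _ : E => (0 : κ → ℝ)), by simp⟩
    | add x y _ _ hx hy =>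
      exact ⟨by simpa [map_add] using hx.1.add hy.1, by simp [hx.2, hy.2]⟩
    | smul a x _ hx =>
      exact ⟨by simpa [map_smul] using hx.1.const_smul a, by simp [hx.2]⟩
  · rintro c ⟨hc, hm⟩
    by_cases hE : Subsingleton E
    · have hc0 : c = 0 := funext fun x => by rw [Subsingleton.elim x m]; exact hm
      rw [hc0]
      exact (Submodule.span ℝ _).zero_mem
    · have : Nontrivial E := not_subsingleton_iff_nontrivial.mp hE
      let b := Module.Basis.ofVectorSpace ℝ E
      obtain ⟨i₀⟩ : Nonempty (Module.Basis.ofVectorSpaceIndex ℝ E) := b.index_nonempty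
      set v : E := b i₀ with hv
      let L : E →L[ℝ] ℝ := LinearMap.toContinuousLinearMap (b.coord i₀)
      have hLv : L v = 1 := by
        simp [L, hv, Module.Basis.coord_apply]
      have hcrep : c = ∑ i : κ, (fun x => bz.equivFun (c x) i • bz i) := by
        funext x
        rw [Finset.sum_apply]
        exact (bz.sum_equivFun (c x)).symm
      rw [hcrep]
      apply Submodule.sum_mem
      intro i _
      apply Submodule.subset_span
      have hceq : (fun y => bz.equivFun (L y • bz i)) = ⇑(L.smulRight (bz.equivFun (bz i))) := by
        funext y
        simp [map_smul]
      refine ⟨fun x => bz.equivFun (c x) i • v, fun x => L x • bz i, ?_, ?_, ?_, ?_⟩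
      · exact ((ContinuousLinearMap.proj (R := ℝ) (φ := fun _ : κ => ℝ) i).contDiff.comp hc).smul
          contDiff_const
      · rw [hceq]
        exact (L.smulRight (bz.equivFun (bz i))).contDiff
      · simp [hm]
      · funext x
        rw [hceq, ContinuousLinearMap.fderiv]
        simp only [ContinuousLinearMap.smulRight_apply, map_smul, smul_eq_mul, hLv, mul_one,
          LinearEquiv.symm_apply_apply, one_smul]
end
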